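/- Let h, w : ℤ⁺ → ℤ⁺ with h ≻ 1 and w ≻ 1. If w ≺ √h, then L[h, w] ∼ w²·ln(√h / w); that is, L[h(n), w(n)] / (w(n)²·ln(√(h(n))/w(n))) → 1 as n → ∞. -/

import Mathlib

open Filter

/-- A Kostant picture of height `η`. -/
def IsKostant {w : ℕ} (η : Fin w → ℕ) (c : Fin w → Fin w → ℕ) : Prop :=
  (∀ i j : Fin w, j < i → c i j = 0) ∧
  ∀ m : Fin w, (∑ i : Fin w, ∑ j : Fin w, (if i ≤ m ∧ m ≤ j then c i j else 0)) = η m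

/-- Kostant's partition function. -/
noncomputable def KPF {w : ℕ} (η : Fin w → ℕ) : ℕ :=
  Set.ncard {c : Fin w → Fin w → ℕ | IsKostant η c}

/-- `L[h,w] = ln KPF[(h,…,h)]` for the constant tuple of length `w`. -/
noncomputable def Lbox (h w : ℕ) : ℝ := Real.log (KPF (fun _ : Fin w => h))

/-!
Fixing the strictly upper triangular entries arbitrarily in `[0, H / W²]` and solving for the
diagonal gives `(H / W² + 1) ^ (W choose 2)` pictures of constant height `H`, so
`L[H, W] ≥ (W² - W) log (√H / W)`. Conversely every picture has weight
`∑ (j - i + 1) c i j = W H`, so for each `t > 0` the number of pictures is at most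
`e^{tWH} ∏_{i ≤ j} (1 - e^{-t (j - i + 1)})⁻¹`. With `t = W / H`, `(1 - e^{-x})⁻¹ ≤ e^x / x` and
`W^m / m! ≤ e^W` this gives `L[H, W] ≤ (W² + W) log (√H / W) + 3 W²`. Both bounds are
`W² log (√H / W) (1 + o(1))` as soon as `W → ∞` and `√H / W → ∞`.
-/

open Finset Real

def pictureHeight {W : ℕ} (c : Fin W → Fin W → ℕ) (m : Fin W) : ℕ :=
  ∑ i, ∑ j, if i ≤ m ∧ m ≤ j then c i j else 0

section Kostant

variable {W : ℕ}

theorem isKostant_iff {η : Fin W → ℕ} {c : Fin W → Fin W → ℕ} :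
    IsKostant η c ↔ (∀ i j, j < i → c i j = 0) ∧ ∀ m, pictureHeight c m = η m :=
  Iff.rfl

theorem pictureHeight_add (c d : Fin W → Fin W → ℕ) (m : Fin W) :
    pictureHeight (c + d) m = pictureHeight c m + pictureHeight d m := by
  simp only [pictureHeight, Pi.add_apply, ← sum_add_distrib, ite_add_ite, add_zero]

theorem pictureHeight_diagonal (v : Fin W → ℕ) (m : Fin W) :
    pictureHeight (fun i j => if i = j then v i else 0) m = v m := by
  rw [pictureHeight, sum_eq_single m, sum_eq_single m]
  · simp
  · intro j _ hj
    simp [Ne.symm hj]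
  · simp
  · intro i _ hi
    exact sum_eq_zero fun j _ => by grind
  · simp

theorem isKostant_diagonal (η : Fin W → ℕ) :
    IsKostant η (fun i j => if i = j then η i else 0) :=
  isKostant_iff.2 ⟨fun _ _ hji => if_neg hji.ne', pictureHeight_diagonal η⟩

namespace IsKostant

variable {η : Fin W → ℕ} {c : Fin W → Fin W → ℕ}

theorem le_height (hc : IsKostant η c) (i j : Fin W) : c i j ≤ η i := by
  rcases lt_or_ge j i with hji | hij
  · simp [hc.1 i j hji]
  calc c i j = if i ≤ i ∧ i ≤ j then c i j else 0 := by simp [hij]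
    _ ≤ ∑ j', if i ≤ i ∧ i ≤ j' then c i j' else 0 :=
      single_le_sum (f := fun j' => if i ≤ i ∧ i ≤ j' then c i j' else 0)
        (fun _ _ => Nat.zero_le _) (mem_univ j)
    _ ≤ pictureHeight c i :=
      single_le_sum (f := fun i' => ∑ j', if i' ≤ i ∧ i ≤ j' then c i' j' else 0)
        (fun _ _ => Nat.zero_le _) (mem_univ i)
    _ = η i := hc.2 i

theorem sum_card_Icc_mul (hc : IsKostant η c) :
    ∑ i, ∑ j, #(Icc i j) * c i j = ∑ m, η m := by
  rw [← sum_congr rfl fun m _ => hc.2 m, eq_comm, sum_comm]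
  refine sum_congr rfl fun i _ => ?_
  rw [sum_comm]
  refine sum_congr rfl fun j _ => ?_
  rw [← sum_filter, sum_const, smul_eq_mul]
  congr 2
  ext m
  simp

end IsKostant

theorem setOf_isKostant_finite (η : Fin W → ℕ) : {c | IsKostant η c}.Finite :=
  (Set.Finite.pi fun i => Set.Finite.pi fun _ => Set.finite_Iic (η i)).subset
    fun _ hc i _ j _ => hc.le_height i j

theorem KPF_eq_card (η : Fin W → ℕ) : KPF η = #(setOf_isKostant_finite η).toFinset :=
  Set.ncard_eq_toFinset_card _ _

theorem KPF_pos (η : Fin W → ℕ) : 0 < KPF η :=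
  (Set.ncard_pos (setOf_isKostant_finite η)).2 ⟨_, isKostant_diagonal η⟩

end Kostant

theorem sum_fin_sub_one_sub (W : ℕ) : ∑ i : Fin W, (W - 1 - i) = W.choose 2 := by
  rw [Fin.sum_univ_eq_sum_range (fun i => W - 1 - i), Nat.choose_two_right, ← sum_range_id]
  exact sum_range_reflect id W

theorem sum_fin_sub (W : ℕ) : ∑ i : Fin W, (W - i) = W.choose 2 + W := by
  rw [← sum_fin_sub_one_sub]
  calc ∑ i : Fin W, (W - i) = ∑ i : Fin W, ((W - 1 - i) + 1) :=
        sum_congr rfl fun i _ => by have := i.isLt; omega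
    _ = _ := by simp [sum_add_distrib]

theorem card_piFinset_strictUpper (W K : ℕ) :
    #(Fintype.piFinset fun i : Fin W => Fintype.piFinset fun j : Fin W =>
      if i < j then range (K + 1) else {0}) = (K + 1) ^ W.choose 2 := by
  rw [← sum_fin_sub_one_sub, ← prod_pow_eq_pow_sum, Fintype.card_piFinset]
  refine prod_congr rfl fun i _ => ?_
  rw [Fintype.card_piFinset, ← Fin.card_Ioi, ← prod_const, ← filter_lt_eq_Ioi, prod_filter]
  exact prod_congr rfl fun j _ => by split_ifs <;> simp

theorem isKostant_add_diagonal {W : ℕ} {η : Fin W → ℕ} {d : Fin W → Fin W → ℕ}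
    (hd : ∀ i j, ¬ i < j → d i j = 0) (hη : ∀ m, pictureHeight d m ≤ η m) :
    IsKostant η (d + fun i j => if i = j then η i - pictureHeight d i else 0) := by
  refine isKostant_iff.2 ⟨fun i j hji => ?_, fun m => ?_⟩
  · simp [hd i j (lt_asymm hji), hji.ne']
  · rw [pictureHeight_add, pictureHeight_diagonal]
    exact Nat.add_sub_cancel' (hη m)

theorem pow_choose_two_le_KPF {W K : ℕ} {η : Fin W → ℕ} (hK : ∀ m, W * W * K ≤ η m) :
    (K + 1) ^ W.choose 2 ≤ KPF η := by
  set box := Fintype.piFinset fun i : Fin W => Fintype.piFinset fun j : Fin W =>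
    if i < j then range (K + 1) else {0}
  have mem_box : ∀ d ∈ box, ∀ i j, d i j ≤ K ∧ (¬ i < j → d i j = 0) := by
    intro d hd i j
    have := Fintype.mem_piFinset.1 (Fintype.mem_piFinset.1 hd i) j
    split_ifs at this with hij
    · exact ⟨Nat.lt_succ_iff.1 (mem_range.1 this), absurd hij⟩
    · rw [mem_singleton.1 this]; exact ⟨Nat.zero_le _, fun _ => rfl⟩
  have height_le : ∀ d ∈ box, ∀ m, pictureHeight d m ≤ η m := fun d hd m =>
    calc pictureHeight d m ≤ ∑ _i : Fin W, ∑ _j : Fin W, K :=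
          sum_le_sum fun i _ => sum_le_sum fun j _ => by
            split_ifs
            · exact (mem_box d hd i j).1
            · exact Nat.zero_le _
      _ = W * W * K := by simp [mul_assoc]
      _ ≤ η m := hK m
  let fill (d : Fin W → Fin W → ℕ) :=
    d + fun i j => if i = j then η i - pictureHeight d i else 0
  have maps : Set.MapsTo fill box (setOf_isKostant_finite η).toFinset := fun d hd => by
    simpa using isKostant_add_diagonal (mem_box d hd · · |>.2) (height_le d hd)
  have inj : Set.InjOn fill box := fun d₁ hd₁ d₂ hd₂ heq => by
    funext i j
    by_cases hij : i < j
    · simpa [fill, hij.ne] using congrFun (congrFun heq i) j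
    · rw [(mem_box d₁ hd₁ i j).2 hij, (mem_box d₂ hd₂ i j).2 hij]
  rw [← card_piFinset_strictUpper W K, KPF_eq_card]
  exact card_le_card_of_injOn fill maps inj

theorem sum_range_exp_neg_mul_le {x : ℝ} (hx : 0 < x) (n : ℕ) :
    ∑ k ∈ range n, exp (-(x * k)) ≤ exp (x - log x) := by
  have hr : exp (-x) < 1 := exp_lt_one_iff.2 (neg_lt_zero.2 hx)
  calc ∑ k ∈ range n, exp (-(x * k)) = ∑ k ∈ Ico 0 n, exp (-x) ^ k := by
        rw [range_eq_Ico]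
        exact sum_congr rfl fun k _ => by rw [← exp_nat_mul]; ring_nf
    _ ≤ exp (-x) ^ 0 / (1 - exp (-x)) := geom_sum_Ico_le_of_lt_one (exp_pos _).le hr
    _ ≤ exp x / x := by
        rw [pow_zero, div_le_div_iff₀ (sub_pos.2 hr) hx, one_mul, mul_sub, mul_one, ← exp_add,
          add_neg_cancel, exp_zero]
        linarith [add_one_le_exp x]
    _ = exp (x - log x) := by rw [exp_sub, exp_log hx]

theorem prod_fin_ite_le_eq_prod_range {M : Type*} [CommMonoid M] {W : ℕ} (g : ℕ → M)
    (i : Fin W) :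
    ∏ j : Fin W, (if i ≤ j then g (j + 1 - i) else 1) = ∏ k ∈ range (W - i), g (k + 1) := by
  simp only [Fin.le_iff_val_le_val]
  rw [Fin.prod_univ_eq_prod_range (fun j => if (i : ℕ) ≤ j then g (j + 1 - i) else 1),
    ← prod_range_mul_prod_Ico _ i.isLt.le, prod_eq_one, one_mul, prod_Ico_eq_prod_range]
  · exact prod_congr rfl fun k _ => by rw [if_pos (by omega)]; congr 1; omega
  · intro j hj
    rw [if_neg (by simp at hj; omega)]

theorem KPF_le_exp_mul_prod_sum {W : ℕ} (η : Fin W → ℕ) (t : ℝ) :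
    (KPF η : ℝ) ≤ exp (t * ∑ m, (η m : ℝ)) * ∏ i, ∏ j,
      ∑ k ∈ (if i ≤ j then range (η i + 1) else {0}), exp (-(t * #(Icc i j) * k)) := by
  set E := exp (t * ∑ m, (η m : ℝ))
  let f (i j : Fin W) (k : ℕ) : ℝ := exp (-(t * #(Icc i j) * k))
  let T (i j : Fin W) : Finset ℕ := if i ≤ j then range (η i + 1) else {0}
  have weight_one : ∀ c, IsKostant η c → E * ∏ i, ∏ j, f i j (c i j) = 1 := by
    intro c hc
    have hweight := congrArg (Nat.cast : ℕ → ℝ) hc.sum_card_Icc_mul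
    push_cast at hweight
    simp only [f, E, ← exp_sum, ← exp_add, exp_eq_one_iff, sum_neg_distrib, mul_assoc, ← mul_sum,
      hweight]
    ring
  have subset_box : (setOf_isKostant_finite η).toFinset ⊆ Fintype.piFinset fun i =>
      Fintype.piFinset (T i) := fun c hc => by
    simp only [Set.Finite.mem_toFinset, Set.mem_ofPred_eq] at hc
    simp only [Fintype.mem_piFinset, T]
    intro i j
    split_ifs with hij
    · exact mem_range.2 (Nat.lt_succ_of_le (hc.le_height i j))
    · exact mem_singleton.2 (hc.1 i j (not_le.1 hij))
  calc (KPF η : ℝ) = ∑ c ∈ (setOf_isKostant_finite η).toFinset, 1 := by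
        rw [KPF_eq_card]; simp
    _ = ∑ c ∈ (setOf_isKostant_finite η).toFinset, E * ∏ i, ∏ j, f i j (c i j) :=
        sum_congr rfl fun c hc => (weight_one c (by simpa using hc)).symm
    _ ≤ ∑ c ∈ Fintype.piFinset (fun i => Fintype.piFinset (T i)),
          E * ∏ i, ∏ j, f i j (c i j) :=
        sum_le_sum_of_subset_of_nonneg subset_box fun _ _ _ => by positivity
    _ = E * ∏ i, ∏ j, ∑ k ∈ T i j, f i j k := by
        rw [← mul_sum, ← prod_univ_sum (fun i => Fintype.piFinset (T i))
          (fun i r => ∏ j, f i j (r j))]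
        exact congrArg (E * ·) (prod_congr rfl fun i _ => (prod_univ_sum _ _).symm)

theorem KPF_le_exp {W : ℕ} (η : Fin W → ℕ) {t : ℝ} (ht : 0 < t) :
    (KPF η : ℝ) ≤ exp (t * ∑ m, (η m : ℝ) +
      ∑ i : Fin W, ∑ k ∈ range (W - i), (t * (k + 1) - log (t * (k + 1)))) := by
  set φ : ℕ → ℝ := fun ℓ => exp (t * ℓ - log (t * ℓ))
  have factor_le : ∀ i j : Fin W,
      ∑ k ∈ (if i ≤ j then range (η i + 1) else {0}), exp (-(t * #(Icc i j) * k)) ≤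
        if i ≤ j then φ (j + 1 - i) else 1 := by
    intro i j
    split_ifs with hij
    · have hℓ : (0 : ℝ) < ((j + 1 - i : ℕ) : ℝ) := Nat.cast_pos.2 (by omega)
      rw [Fin.card_Icc]
      exact sum_range_exp_neg_mul_le (mul_pos ht hℓ) _
    · simp
  calc (KPF η : ℝ) ≤ exp (t * ∑ m, (η m : ℝ)) * ∏ i, ∏ j,
        ∑ k ∈ (if i ≤ j then range (η i + 1) else {0}), exp (-(t * #(Icc i j) * k)) :=
        KPF_le_exp_mul_prod_sum η t
    _ ≤ exp (t * ∑ m, (η m : ℝ)) * ∏ i, ∏ j : Fin W, (if i ≤ j then φ (j + 1 - i) else 1) := by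
        refine mul_le_mul_of_nonneg_left (prod_le_prod (fun i _ => prod_nonneg fun j _ => ?_)
          fun i _ => prod_le_prod (fun j _ => ?_) fun j _ => factor_le i j) (exp_pos _).le <;>
        exact sum_nonneg fun _ _ => (exp_pos _).le
    _ = _ := by
        simp_rw [prod_fin_ite_le_eq_prod_range φ, φ, ← exp_sum, ← exp_add]
        push_cast
        rfl

theorem two_mul_log_sqrt_div {x : ℝ} (hx : 0 ≤ x) (y : ℝ) :
    2 * log (√x / y) = log (x / y ^ 2) := by
  have hsq : x / y ^ 2 = (√x / y) ^ 2 := by rw [div_pow, sq_sqrt hx]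
  rw [hsq, log_pow]
  norm_num

theorem sum_range_log_div_le {x : ℝ} (hx : 0 < x) (m : ℕ) :
    ∑ k ∈ range m, log (x / (k + 1)) ≤ x := by
  have hfact : ∏ k ∈ range m, ((k : ℝ) + 1) = m.factorial := by
    exact_mod_cast prod_range_add_one_eq_factorial m
  rw [← log_prod fun k _ => by positivity, prod_div_distrib, prod_const, card_range, hfact,
    log_le_iff_le_exp (by positivity)]
  exact pow_div_factorial_le_exp x hx.le m

theorem sum_range_sub_log_le {H W m : ℕ} (hW : 0 < W) (hWH : W * W ≤ H) (hm : m ≤ W) :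
    ∑ k ∈ range m, ((W : ℝ) / H * (k + 1) - log ((W : ℝ) / H * (k + 1))) ≤
      m * (1 + log ((H : ℝ) / W ^ 2)) + W := by
  have hW' : (1 : ℝ) ≤ W := by exact_mod_cast hW
  have hWH' : (W : ℝ) * W ≤ H := by exact_mod_cast hWH
  have hH : (0 : ℝ) < H := by nlinarith
  have term : ∀ k ∈ range m, (W : ℝ) / H * (k + 1) - log ((W : ℝ) / H * (k + 1)) ≤
      1 + log ((H : ℝ) / W ^ 2) + log (W / (k + 1)) := by
    intro k hk
    have hkW : (k : ℝ) + 1 ≤ W := by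
      have : k + 1 ≤ W := by have := mem_range.1 hk; omega
      exact_mod_cast this
    have hle : (W : ℝ) / H * (k + 1) ≤ 1 := by
      rw [div_mul_eq_mul_div, div_le_one hH]
      nlinarith
    have hlog : log ((W : ℝ) / H * (k + 1)) = -(log ((H : ℝ) / W ^ 2) + log (W / (k + 1))) := by
      rw [← log_mul (by positivity) (by positivity), ← log_inv]
      congr 1
      field_simp
    linarith
  calc _ ≤ ∑ k ∈ range m, (1 + log ((H : ℝ) / W ^ 2) + log (W / (k + 1))) := sum_le_sum term
    _ = m * (1 + log ((H : ℝ) / W ^ 2)) + ∑ k ∈ range m, log (W / (k + 1)) := by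
        rw [sum_add_distrib, sum_const, card_range, nsmul_eq_mul]
    _ ≤ _ := by grw [sum_range_log_div_le (by positivity) m]

theorem Lbox_ge {H W : ℕ} (hW : 0 < W) (hWH : W * W ≤ H) :
    ((W : ℝ) ^ 2 - W) * log (√H / W) ≤ Lbox H W := by
  set K := H / (W * W)
  have hpow : (K + 1) ^ W.choose 2 ≤ KPF fun _ : Fin W => H :=
    pow_choose_two_le_KPF fun _ => Nat.mul_div_le H (W * W)
  have hK : (H : ℝ) / W ^ 2 < K + 1 := by
    have := Nat.lt_floor_add_one ((H : ℝ) / (W * W : ℕ))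
    rwa [Nat.floor_div_eq_div, Nat.cast_mul, ← sq] at this
  have hH : (0 : ℝ) < H := by exact_mod_cast (show 0 < H by nlinarith)
  calc ((W : ℝ) ^ 2 - W) * log (√H / W) = (W.choose 2 : ℝ) * log (H / W ^ 2) := by
        rw [Nat.cast_choose_two, ← two_mul_log_sqrt_div hH.le]
        ring
    _ ≤ W.choose 2 * log (K + 1) := by gcongr
    _ = log (((K + 1) ^ W.choose 2 : ℕ) : ℝ) := by push_cast; rw [log_pow]
    _ ≤ Lbox H W := log_le_log (by positivity) (by exact_mod_cast hpow)

theorem Lbox_le {H W : ℕ} (hW : 0 < W) (hWH : W * W ≤ H) :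
    Lbox H W ≤ ((W : ℝ) ^ 2 + W) * log (√H / W) + 3 * W ^ 2 := by
  have hW' : (1 : ℝ) ≤ W := by exact_mod_cast hW
  have hH : (0 : ℝ) < H := by exact_mod_cast (show 0 < H by nlinarith)
  have hsum : (∑ i : Fin W, ((W - i : ℕ) : ℝ)) = W * (W - 1) / 2 + W := by
    rw [← Nat.cast_sum, sum_fin_sub]
    push_cast [Nat.cast_choose_two]
    ring
  have hKPF := KPF_le_exp (fun _ : Fin W => H) (t := (W : ℝ) / H) (by positivity)
  rw [← log_le_iff_le_exp (by exact_mod_cast KPF_pos _)] at hKPF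
  calc Lbox H W ≤ _ := hKPF
    _ ≤ W ^ 2 + ∑ i : Fin W, (((W - i : ℕ) : ℝ) * (1 + log ((H : ℝ) / W ^ 2)) + W) := by
        refine add_le_add (le_of_eq ?_) (sum_le_sum fun i _ => ?_)
        · simp only [sum_const, card_univ, Fintype.card_fin, nsmul_eq_mul]
          field_simp
        · exact sum_range_sub_log_le hW hWH (Nat.sub_le W i)
    _ = ((W : ℝ) ^ 2 + W) * (2 * log (√H / W)) / 2 + (W ^ 2 + W) / 2 + 2 * W ^ 2 := by
        rw [sum_add_distrib, ← sum_mul, hsum, two_mul_log_sqrt_div hH.le]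
        simp only [sum_const, card_univ, Fintype.card_fin, nsmul_eq_mul]
        ring
    _ ≤ _ := by nlinarith

theorem Lbox_div_mem_Icc {H W : ℕ} (hW : 0 < W) (hq : 0 < log (√H / W)) :
    Lbox H W / (W ^ 2 * log (√H / W)) ∈
      Set.Icc (1 - 1 / (W : ℝ)) (1 + 1 / W + 3 / log (√H / W)) := by
  have hW' : (0 : ℝ) < W := by exact_mod_cast hW
  have hWH : W * W ≤ H := by
    have hlt : (W : ℝ) < √H := by
      rwa [← one_lt_div hW', ← log_pos_iff (by positivity)]
    have := (lt_sqrt hW'.le).1 hlt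
    exact_mod_cast (sq (W : ℝ) ▸ this).le
  have hden : (0 : ℝ) < W ^ 2 * log (√H / W) := by positivity
  constructor
  · rw [le_div_iff₀ hden]
    calc (1 - 1 / (W : ℝ)) * (W ^ 2 * log (√H / W)) = ((W : ℝ) ^ 2 - W) * log (√H / W) := by
          field_simp
      _ ≤ Lbox H W := Lbox_ge hW hWH
  · rw [div_le_iff₀ hden]
    calc Lbox H W ≤ ((W : ℝ) ^ 2 + W) * log (√H / W) + 3 * W ^ 2 := Lbox_le hW hWH
      _ = _ := by field_simp

theorem Lbox_asymp_narrow_general (h w : ℕ → ℕ)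
    (hh : ∀ n, 0 < h n) (hw : ∀ n, 0 < w n)
    (hw1 : Tendsto (fun n => (1 : ℝ) / w n) atTop (nhds 0))
    (hws : Tendsto (fun n => (w n : ℝ) / Real.sqrt (h n : ℝ)) atTop (nhds 0)) :
    Tendsto (fun n =>
        Lbox (h n) (w n) /
          ((w n : ℝ) ^ 2 * Real.log (Real.sqrt (h n : ℝ) / (w n : ℝ))))
      atTop (nhds 1) := by
  have hws_pos : ∀ n, 0 < (w n : ℝ) / √(h n) := fun n =>
    div_pos (Nat.cast_pos.2 (hw n)) (sqrt_pos.2 (Nat.cast_pos.2 (hh n)))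
  have hq : Tendsto (fun n => log (√(h n) / w n)) atTop atTop := by
    have := (tendsto_nhdsWithin_of_tendsto_nhds_of_eventually_within _ hws
      (Eventually.of_forall hws_pos)).inv_tendsto_nhdsGT_zero
    simpa only [Function.comp_def, Pi.inv_apply, inv_div] using tendsto_log_atTop.comp this
  have lower : Tendsto (fun n => 1 - 1 / (w n : ℝ)) atTop (nhds 1) := by
    simpa using tendsto_const_nhds.sub hw1
  have upper :
      Tendsto (fun n => 1 + 1 / (w n : ℝ) + 3 / log (√(h n) / w n)) atTop (nhds 1) := by
    simpa using (tendsto_const_nhds.add hw1).add (tendsto_const_nhds.div_atTop hq)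
  have bounds := (hq.eventually_gt_atTop 0).mono fun n hn => Lbox_div_mem_Icc (hw n) hn
  exact tendsto_of_tendsto_of_tendsto_of_le_of_le' lower upper (bounds.mono fun _ hn => hn.1)
    (bounds.mono fun _ hn => hn.2)

/-- If `h ≻ 1`, `w ≻ 1` and `w ≺ √h`, then `L[h,w] ∼ w²·ln(√h/w)`. -/
theorem Lbox_asymp_narrow (h w : ℕ → ℕ)
    (hh : ∀ n, 0 < h n) (hw : ∀ n, 0 < w n)
    (hh1 : Tendsto (fun n => (1 : ℝ) / h n) atTop (nhds 0))
    (hw1 : Tendsto (fun n => (1 : ℝ) / w n) atTop (nhds 0))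
    (hws : Tendsto (fun n => (w n : ℝ) / Real.sqrt (h n : ℝ)) atTop (nhds 0)) :
    Tendsto (fun n =>
        Lbox (h n) (w n) /
          ((w n : ℝ) ^ 2 * Real.log (Real.sqrt (h n : ℝ) / (w n : ℝ))))
      atTop (nhds 1) :=
  Lbox_asymp_narrow_general h w hh hw hw1 hws
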